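/- arXiv:1604.03681 — 7 statements merged into one kernel-verified Lean document; each statement's English description precedes it below -/
import Mathlib

section
/- Let p ≥ 2 be an integer and q = e^{iπ/p}. For every integer n with 0 ≤ n ≤ p−1, the balanced quantum binomial coefficient satisfies [p−1 choose n] = [p−1]!/([n]!·[p−1−n]!) = 1. -/
/-!
`q = e^{iπ/p}` is a primitive `2p`-th root of unity, so `q^p = -1`. This gives the reflection
`[p - k] = [k]`, whence `[n+1] ⋯ [p-1] = [p-1-n] ⋯ [1]`, i.e. `[p-1]! = [n]! [p-1-n]!`; and
`[k] ≠ 0` for `0 < k < p` because `q^{2k} ≠ 1`.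
-/

open Finset

theorem Finset.prod_Icc_one_eq_mul_of_reflect {M : Type*} [CommMonoid M] (f : ℕ → M) {N n : ℕ}
    (hf : ∀ k ∈ Icc 1 N, f (N + 1 - k) = f k) (hn : n ≤ N) :
    ∏ k ∈ Icc 1 N, f k = (∏ k ∈ Icc 1 n, f k) * ∏ k ∈ Icc 1 (N - n), f k := by
  have hsplit : ∏ k ∈ Icc 1 N, f k = (∏ k ∈ Icc 1 n, f k) * ∏ k ∈ Ioc n N, f k :=
    (prod_Ioc_consecutive f n.zero_le hn).symm
  rw [hsplit]
  congr 1
  refine prod_nbij' (fun k => N + 1 - k) (fun k => N + 1 - k) ?_ ?_ ?_ ?_ ?_ <;>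
    intro k hk <;> simp only [mem_Ioc, mem_Icc] at hk ⊢
  iterate 4 omega
  rw [← hf (N + 1 - k) (by simp only [mem_Icc]; omega), Nat.sub_sub_self (by omega)]

section Quantum

variable {K : Type*} [Field K]

def quantumInt (q : K) (k : ℕ) : K := (q ^ k - q⁻¹ ^ k) / (q - q⁻¹)

def quantumFactorial (q : K) (m : ℕ) : K := ∏ k ∈ Icc 1 m, quantumInt q k

theorem quantumInt_sub_of_pow_eq_neg_one {q : K} {p k : ℕ} (hq : q ≠ 0) (hqp : q ^ p = -1)
    (hk : k ≤ p) : quantumInt q (p - k) = quantumInt q k := by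
  have hpos : q ^ (p - k) = -q⁻¹ ^ k := by rw [pow_sub₀ q hq hk, hqp, inv_pow]; ring
  have hneg : q⁻¹ ^ (p - k) = -q ^ k := by
    rw [pow_sub₀ q⁻¹ (inv_ne_zero hq) hk, inv_pow, hqp, inv_pow, inv_inv]; ring
  simp only [quantumInt, hpos, hneg]
  ring

theorem quantumFactorial_eq_mul_of_pow_eq_neg_one {q : K} {p n : ℕ} (hq : q ≠ 0)
    (hqp : q ^ p = -1) (hn : n ≤ p - 1) :
    quantumFactorial q (p - 1) = quantumFactorial q n * quantumFactorial q (p - 1 - n) := by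
  refine prod_Icc_one_eq_mul_of_reflect _ (fun k hk => ?_) hn
  simp only [mem_Icc] at hk
  rw [show p - 1 + 1 - k = p - k by omega]
  exact quantumInt_sub_of_pow_eq_neg_one hq hqp (by omega)

namespace IsPrimitiveRoot

variable {ζ : K} {p : ℕ}

theorem pow_half_eq_neg_one (h : IsPrimitiveRoot ζ (2 * p)) (hp : 0 < p) : ζ ^ p = -1 :=
  (h.pow (by omega) (mul_comm 2 p)).eq_neg_one_of_two_right

theorem pow_sub_inv_pow_ne_zero (h : IsPrimitiveRoot ζ (2 * p)) {k : ℕ} (hk0 : 0 < k)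
    (hkp : k < p) : ζ ^ k - ζ⁻¹ ^ k ≠ 0 := by
  intro hzero
  apply h.pow_ne_one_of_pos_of_lt (l := 2 * k) (by omega) (by omega)
  rw [two_mul, pow_add]
  nth_rewrite 2 [sub_eq_zero.mp hzero]
  rw [← mul_pow, mul_inv_cancel₀ (h.ne_zero (by omega)), one_pow]

theorem quantumInt_ne_zero (h : IsPrimitiveRoot ζ (2 * p)) {k : ℕ} (hk0 : 0 < k) (hkp : k < p) :
    quantumInt ζ k ≠ 0 := by
  have hden := h.pow_sub_inv_pow_ne_zero one_pos (by omega)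
  rw [pow_one, pow_one] at hden
  exact div_ne_zero (h.pow_sub_inv_pow_ne_zero hk0 hkp) hden

theorem quantumFactorial_ne_zero (h : IsPrimitiveRoot ζ (2 * p)) {m : ℕ} (hm : m < p) :
    quantumFactorial ζ m ≠ 0 :=
  prod_ne_zero_iff.mpr fun k hk => by
    simp only [mem_Icc] at hk
    exact h.quantumInt_ne_zero (by omega) (by omega)

end IsPrimitiveRoot

end Quantum

/-- For `q = e^{iπ/p}` and `0 ≤ n ≤ p-1`, the balanced quantum binomial coefficient
`[p-1 choose n] = [p-1]! / ([n]! [p-1-n]!)` equals `1`. -/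
theorem quantum_binomial_top_row (p n : ℕ) (hp : 2 ≤ p) (hn : n ≤ p - 1) :
    let q : ℂ := Complex.exp (Real.pi * Complex.I / p)
    let qi : ℕ → ℂ := fun k => (q ^ k - q⁻¹ ^ k) / (q - q⁻¹)
    let qfact : ℕ → ℂ := fun m => ∏ k ∈ Finset.Icc 1 m, qi k
    qfact (p - 1) / (qfact n * qfact (p - 1 - n)) = 1 := by
  intro q qi qfact
  have hq : IsPrimitiveRoot q (2 * p) := by
    have hexp := Complex.isPrimitiveRoot_exp (2 * p) (by omega)
    rwa [show 2 * Real.pi * Complex.I / ((2 * p : ℕ) : ℂ) = Real.pi * Complex.I / p by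
      push_cast; field_simp] at hexp
  change quantumFactorial q (p - 1) / (quantumFactorial q n * quantumFactorial q (p - 1 - n)) = 1
  rw [quantumFactorial_eq_mul_of_pow_eq_neg_one (hq.ne_zero (by omega))
    (hq.pow_half_eq_neg_one (by omega)) hn]
  exact div_self (mul_ne_zero (hq.quantumFactorial_ne_zero (by omega))
    (hq.quantumFactorial_ne_zero (by omega)))
end

section
/- Let p ≥ 1 be an integer. The polynomial ψ(x) = U_{2p+1}(x) − U_{2p−1}(x) − 2 factors over ℝ as ψ(x) = (x − 2)·(x + 2)·∏_{j=1}^{p−1}(x − 2cos(πj/p))², where U_s are the Chebyshev polynomials with U_0 = 0, U_1 = 1, U_{s+1} = x·U_s − U_{s−1}. -/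
/-!
In Mathlib's normalisation `chebU (n + 1)` is the Vieta–Fibonacci polynomial `S n`, and
`S (n + 1) - S (n - 1)` is the Vieta–Lucas polynomial `C (n + 1)`. Hence
`ψ = C (2p) - 2 = C p ^ 2 - 4 = (X ^ 2 - 4) * S (p - 1) ^ 2`, the last step being the polynomial
form of `4 cos² θ - 4 = -4 sin² θ`. Finally `S (p - 1)` is monic of degree `p - 1` and, since
`S n (2 cos θ) * sin θ = sin ((n + 1) θ)`, it vanishes at the `p - 1` distinct points
`2 cos (π j / p)`, `0 < j < p`.
-/

open Polynomial

/-- The renormalized Chebyshev polynomials of the second kind: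
`U 0 = 0`, `U 1 = 1`, `U (s+2) = X · U (s+1) - U s`. -/
noncomputable def chebU : ℕ → Polynomial ℤ
  | 0 => 0
  | 1 => 1
  | (n + 2) => Polynomial.X * chebU (n + 1) - chebU n

open Real

namespace Polynomial

theorem Monic.eq_prod_X_sub_C_of_isRoot {R ι : Type*} [CommRing R] [IsDomain R]
    {p : R[X]} (hp : p.Monic) {s : Finset ι} {r : ι → R} (hr : Set.InjOn r s)
    (hroot : ∀ i ∈ s, p.IsRoot (r i)) (hdeg : p.natDegree = s.card) :
    p = ∏ i ∈ s, (X - C (r i)) := by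
  classical
  have hcard : (s.image r).card = p.natDegree := by rw [Finset.card_image_of_injOn hr, hdeg]
  have hroots : p.roots = (s.image r).val :=
    roots_eq_of_natDegree_le_card_of_ne_zero (by simpa using hroot) hcard.ge hp.ne_zero
  rw [← Finset.prod_image (f := fun a => X - C a) hr,
    ← prod_multiset_X_sub_C_of_monic_of_roots_card_eq hp
      (by rw [hroots, Finset.card_val, hcard]), hroots]
  rfl

theorem natDegree_two_mul_X {R : Type*} [CommRing R] [NeZero (2 : R)] :
    (2 * X : R[X]).natDegree = 1 := by
  rw [← C_ofNat]
  exact natDegree_C_mul_X 2 two_ne_zero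

theorem leadingCoeff_two_mul_X {R : Type*} [CommRing R] : (2 * X : R[X]).leadingCoeff = 2 := by
  rw [← C_ofNat, leadingCoeff_C_mul_X]

namespace Chebyshev

variable (R : Type*) [CommRing R]

theorem C_eq_S_sub_S (n : ℤ) : C R n = S R n - S R (n - 2) := by
  linear_combination C_eq_S_sub_X_mul_S R n + S_eq R n

theorem C_sq_sub_four (n : ℤ) : C R n ^ 2 - 4 = (X ^ 2 - 4) * S R (n - 1) ^ 2 := by
  have h := S_sq_add_S_sq R (n - 1)
  rw [sub_add_cancel] at h
  linear_combination (C R n + 2 * S R n - X * S R (n - 1)) * C_eq_S_sub_X_mul_S R n + 4 * h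

theorem S_two_mul_sub_S_sub_two (n : ℤ) :
    S R (2 * n) - S R (2 * n - 2) - 2 = (X ^ 2 - 4) * S R (n - 1) ^ 2 := by
  rw [← C_sq_sub_four, ← C_eq_S_sub_S, C_mul, C_two]
  simp only [sub_comp, pow_comp, X_comp, ofNat_comp]
  ring

section Degree

variable [IsDomain R] [NeZero (2 : R)]

theorem natDegree_S_natCast (n : ℕ) : (S R n).natDegree = n := by
  simpa [natDegree_comp, natDegree_two_mul_X] using congrArg natDegree (S_comp_two_mul_X R n)

theorem monic_S_natCast (n : ℕ) : (S R n).Monic := by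
  have h := congrArg leadingCoeff (S_comp_two_mul_X R n)
  rw [leadingCoeff_comp (by simp [natDegree_two_mul_X]), natDegree_S_natCast,
    leadingCoeff_U_natCast, leadingCoeff_two_mul_X] at h
  exact (mul_eq_right₀ (pow_ne_zero n two_ne_zero)).mp h

end Degree

theorem isRoot_S_real_two_mul_cos {n : ℤ} {θ : ℝ} (hθ : sin θ ≠ 0)
    (h : sin ((n + 1) * θ) = 0) : (S ℝ n).IsRoot (2 * cos θ) := by
  rw [← S_two_mul_real_cos] at h
  exact (mul_eq_zero.mp h).resolve_right hθ

theorem S_real_eq_prod_X_sub_C (n : ℕ) :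
    S ℝ n = ∏ j ∈ Finset.Icc 1 n, (X - Polynomial.C (2 * cos (π * j / (n + 1)))) := by
  have hangle : ∀ j ∈ Finset.Icc 1 n, π * j / (n + 1) ∈ Set.Ioo 0 π := by
    intro j hj
    have hj' : (1 : ℝ) ≤ j ∧ (j : ℝ) ≤ n := by simpa using hj
    constructor
    · exact div_pos (mul_pos pi_pos (by linarith)) (by positivity)
    · rw [div_lt_iff₀ (by positivity)]
      nlinarith [pi_pos]
  refine (monic_S_natCast ℝ n).eq_prod_X_sub_C_of_isRoot ?_ (fun j hj => ?_)
    (by simp [natDegree_S_natCast])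
  · intro a ha b hb hab
    have hcos := injOn_cos (Set.Ioo_subset_Icc_self (hangle a ha))
      (Set.Ioo_subset_Icc_self (hangle b hb)) (by simpa using hab)
    field_simp at hcos
    exact_mod_cast hcos
  · obtain ⟨hθ₀, hθπ⟩ := hangle j hj
    refine isRoot_S_real_two_mul_cos (sin_pos_of_pos_of_lt_pi hθ₀ hθπ).ne' ?_
    rw [show ((n : ℤ) + 1 : ℝ) * (π * j / (n + 1)) = j * π by push_cast; field_simp]
    exact sin_nat_mul_pi j

end Chebyshev

end Polynomial

open Polynomial.Chebyshev in
theorem chebU_succ (n : ℕ) : chebU (n + 1) = S ℤ n := by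
  induction n using Nat.twoStepInduction with
  | zero => simp [chebU]
  | one => simp [chebU]
  | more n ih₀ ih₁ =>
    rw [chebU, ih₁, ih₀]
    push_cast
    exact (S_add_two ℤ n).symm

open Polynomial.Chebyshev in
theorem chebU_sub_chebU_sub_two (q : ℕ) :
    chebU (2 * (q + 1) + 1) - chebU (2 * q + 1) - 2 = (X ^ 2 - 4) * S ℤ q ^ 2 := by
  rw [chebU_succ, chebU_succ]
  push_cast
  convert S_two_mul_sub_S_sub_two ℤ (q + 1) using 4 <;> ring

/-- The polynomial `ψ = U_{2p+1} - U_{2p-1} - 2` factors over `ℝ` as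
`(x-2)(x+2)∏_{j=1}^{p-1}(x - 2cos(πj/p))²`. -/
theorem psi_factorization (p : ℕ) (hp : 1 ≤ p) :
    (chebU (2 * p + 1) - chebU (2 * p - 1) - 2).map (Int.castRingHom ℝ)
      = (X - C 2) * (X + C 2) *
        ∏ j ∈ Finset.Icc 1 (p - 1), (X - C (2 * Real.cos (Real.pi * j / p))) ^ 2 := by
  obtain ⟨q, rfl⟩ : ∃ q, p = q + 1 := ⟨p - 1, by omega⟩
  rw [show 2 * (q + 1) - 1 = 2 * q + 1 by omega, chebU_sub_chebU_sub_two, Polynomial.map_mul,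
    Polynomial.map_pow, Chebyshev.map_S, Chebyshev.S_real_eq_prod_X_sub_C, ← Finset.prod_pow]
  push_cast
  congr 1
  simp only [Polynomial.map_sub, Polynomial.map_pow, map_X, Polynomial.map_ofNat, C_ofNat]
  ring
end

section
/- Let d ≥ 1 be an integer and t a complex number such that t^m ≠ 1 for all 1 ≤ m ≤ d. Then ∑_{m=1}^{d} (∏_{i=1}^{m−1}(1 − t^{d−i})) / (1 − t^m) = d/(1 − t^d). -/
/-!
Clearing the denominator `1 - t^d`, the claim becomes `S d = d` for
`S d = ∑_{k<d} (1 - t^d) ⋯ (1 - t^(d-k)) / (1 - t^(k+1))`. Writing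
`1 - t^(d+1) = t^(k+1) (1 - t^(d-k)) + (1 - t^(k+1))` in the leading factor of the `k`-th term
of `S (d+1)` splits it into `t^(k+1)` times the `k`-th term of `S d` plus `1 - t^k` times the
`(k-1)`-st one (read as `1` for `k = 0`); the top term of `S d` vanishes, so `S (d+1) = S d + 1`.
-/

open Finset

section

variable {K : Type*} [Field K]

-- Truncated subtraction `d - d = 0` makes this vanish once `k > d`.
def qFalling (t : K) (d k : ℕ) : K :=
  ∏ i ∈ range k, (1 - t ^ (d - i))

lemma qFalling_zero (t : K) (d : ℕ) : qFalling t d 0 = 1 :=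
  prod_range_zero _

lemma qFalling_succ (t : K) (d k : ℕ) :
    qFalling t d (k + 1) = qFalling t d k * (1 - t ^ (d - k)) :=
  prod_range_succ _ _

lemma qFalling_succ_succ (t : K) (d k : ℕ) :
    qFalling t (d + 1) (k + 1) = (1 - t ^ (d + 1)) * qFalling t d k := by
  simp only [qFalling, prod_range_succ', Nat.add_sub_add_right, Nat.sub_zero, mul_comm]

lemma qFalling_self_succ (t : K) (d : ℕ) : qFalling t d (d + 1) = 0 := by
  simp [qFalling_succ]

lemma qFalling_succ_eq_prod_Icc (t : K) (d k : ℕ) :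
    qFalling t d (k + 1) = (1 - t ^ d) * ∏ i ∈ Icc 1 k, (1 - t ^ (d - i)) := by
  rw [qFalling, prod_range_succ', ← Ico_add_one_right_eq_Icc, prod_Ico_eq_prod_range, mul_comm]
  simp only [Nat.sub_zero, Nat.add_sub_cancel, add_comm 1]

lemma qFalling_succ_succ_div {t : K} {d k : ℕ} (hk : k ≤ d) (ht : t ^ (k + 1) ≠ 1) :
    qFalling t (d + 1) (k + 1) / (1 - t ^ (k + 1))
      = t ^ (k + 1) * (qFalling t d (k + 1) / (1 - t ^ (k + 1))) + qFalling t d k := by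
  have hden : 1 - t ^ (k + 1) ≠ 0 := sub_ne_zero.2 ht.symm
  have hsplit : t ^ (k + 1) * t ^ (d - k) = t ^ (d + 1) := by
    rw [← pow_add]; congr 1; omega
  rw [qFalling_succ_succ, qFalling_succ, div_eq_iff hden, add_mul, mul_assoc,
    div_mul_cancel₀ _ hden]
  linear_combination qFalling t d k * hsplit

theorem sum_qFalling_div (t : K) (d : ℕ) (ht : ∀ k < d, t ^ (k + 1) ≠ 1) :
    ∑ k ∈ range d, qFalling t d (k + 1) / (1 - t ^ (k + 1)) = d := by
  induction d with
  | zero => simp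
  | succ d ih =>
    have ht' : ∀ k < d, t ^ (k + 1) ≠ 1 := fun k hk => ht k (by omega)
    have hden : ∀ k ∈ range d, 1 - t ^ (k + 1) ≠ 0 := fun k hk =>
      sub_ne_zero.2 (ht' k (mem_range.1 hk)).symm
    have hshort : ∑ k ∈ range (d + 1), qFalling t d k
        = 1 + ∑ k ∈ range d, (1 - t ^ (k + 1)) * (qFalling t d (k + 1) / (1 - t ^ (k + 1))) := by
      rw [sum_range_succ', qFalling_zero, add_comm]
      congr 1
      exact sum_congr rfl fun k hk => (mul_div_cancel₀ _ (hden k hk)).symm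
    calc ∑ k ∈ range (d + 1), qFalling t (d + 1) (k + 1) / (1 - t ^ (k + 1))
        = ∑ k ∈ range (d + 1), (t ^ (k + 1) * (qFalling t d (k + 1) / (1 - t ^ (k + 1)))
            + qFalling t d k) :=
          sum_congr rfl fun k hk =>
            qFalling_succ_succ_div (Nat.lt_succ_iff.1 (mem_range.1 hk)) (ht k (mem_range.1 hk))
      _ = ∑ k ∈ range d, (t ^ (k + 1) + (1 - t ^ (k + 1)))
            * (qFalling t d (k + 1) / (1 - t ^ (k + 1))) + 1 := by
          rw [sum_add_distrib, sum_range_succ, qFalling_self_succ, hshort]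
          simp only [zero_div, mul_zero, add_zero, add_mul, sum_add_distrib]
          ring
      _ = (d + 1 : ℕ) := by simp [ih ht']

end

theorem partition_identity_sum_general (d : ℕ) (t : ℂ)
    (ht : ∀ m : ℕ, 1 ≤ m → m ≤ d → t ^ m ≠ 1) :
    ∑ m ∈ Finset.Icc 1 d, (∏ i ∈ Finset.Icc 1 (m - 1), (1 - t ^ (d - i))) / (1 - t ^ m)
      = d / (1 - t ^ d) := by
  have hterm : ∀ m ∈ Icc 1 d, (∏ i ∈ Icc 1 (m - 1), (1 - t ^ (d - i))) / (1 - t ^ m)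
      = qFalling t d m / (1 - t ^ m) / (1 - t ^ d) := by
    intro m hm
    obtain ⟨hm1, hmd⟩ := mem_Icc.1 hm
    obtain ⟨k, rfl⟩ : ∃ k, m = k + 1 := ⟨m - 1, by omega⟩
    have hd : 1 - t ^ d ≠ 0 := sub_ne_zero.2 (ht d (by omega) le_rfl).symm
    rw [qFalling_succ_eq_prod_Icc, Nat.add_sub_cancel, div_div, mul_comm (1 - t ^ (k + 1)),
      ← div_div, mul_div_cancel_left₀ _ hd]
  rw [sum_congr rfl hterm, ← sum_div, ← Ico_add_one_right_eq_Icc, sum_Ico_eq_sum_range,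
    Nat.add_sub_cancel]
  simp only [add_comm 1]
  rw [sum_qFalling_div t d fun k hk => ht (k + 1) (by omega) (by omega)]

/-- Partition identity: for `t` with `t^m ≠ 1` for `1 ≤ m ≤ d`,
`∑_{m=1}^{d} (∏_{i=1}^{m-1}(1 - t^{d-i})) / (1 - t^m) = d/(1 - t^d)`. -/
theorem partition_identity_sum (d : ℕ) (hd : 1 ≤ d) (t : ℂ)
    (ht : ∀ m : ℕ, 1 ≤ m → m ≤ d → t ^ m ≠ 1) :
    ∑ m ∈ Finset.Icc 1 d, (∏ i ∈ Finset.Icc 1 (m - 1), (1 - t ^ (d - i))) / (1 - t ^ m)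
      = d / (1 - t ^ d) :=
  partition_identity_sum_general d t ht
end

section
/- Let n ≥ 1 and s ≥ 1 be integers and let q be a complex number that is not a root of unity (and q ≠ 0). Then ∑_{r=0}^{n} (−1)^r · [n choose r]_q · [n+r+s−1 choose n−1]_q = 0, where [a choose b]_q = [a]!/([b]!·[a−b]!) is the balanced quantum binomial coefficient. -/
/-!
Write `m = n - 1`. As a function of `r`, `[r + s + m choose m] = ∏_{j<m} [r + s + 1 + j] / [m]!`
expands into a linear combination of the geometric sequences `r ↦ (q ^ (2k - m)) ^ r`,
`0 ≤ k ≤ m`. By the q-binomial theorem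
`∑_r (-1)^r [m + 1 choose r] z^r = ∏_{k ≤ m} (1 - z q^(m - 2k))`, and each `z = q ^ (2k - m)`
is a root of this product, so the alternating sum kills every one of those sequences.
-/

namespace QuantumBinomial

open Finset

variable {K : Type*} [Field K] (q : K)

noncomputable def qInt (k : ℕ) : K := (q ^ k - q⁻¹ ^ k) / (q - q⁻¹)

noncomputable def qFactorial (m : ℕ) : K := ∏ k ∈ Icc 1 m, qInt q k

noncomputable def qBinom (a b : ℕ) : K := qFactorial q a / (qFactorial q b * qFactorial q (a - b))

/-- The q-Pascal triangle; `q ^ (n + 1) * q⁻¹ ^ (r + 1)` is `q ^ (n - r)` written without truncated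
subtraction. Unlike `qBinom`, which has junk values for `r > n`, it vanishes there. -/
def qChoose : ℕ → ℕ → K
  | _, 0 => 1
  | 0, _ + 1 => 0
  | n + 1, r + 1 => q⁻¹ ^ (r + 1) * qChoose n (r + 1) + q ^ (n + 1) * q⁻¹ ^ (r + 1) * qChoose n r

variable {q}

theorem qInt_add (a b : ℕ) : qInt q (a + b) = q⁻¹ ^ a * qInt q b + q ^ b * qInt q a := by
  simp only [qInt, pow_add]
  ring

theorem qInt_add_eq_mul_pow_add_mul_inv_pow (r t : ℕ) :
    qInt q (r + t) = q ^ t / (q - q⁻¹) * q ^ r + -(q⁻¹ ^ t / (q - q⁻¹)) * q⁻¹ ^ r := by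
  simp only [qInt, pow_add]
  ring

theorem qInt_ne_zero (hq0 : q ≠ 0) {k : ℕ} (hk : q ^ (2 * k) ≠ 1) : qInt q k ≠ 0 := by
  refine div_ne_zero (fun h => hk ?_) (fun h => hk ?_)
  · rw [two_mul, pow_add]
    nth_rewrite 2 [sub_eq_zero.mp h]
    rw [← mul_pow, mul_inv_cancel₀ hq0, one_pow]
  · rw [pow_mul, sq]
    nth_rewrite 2 [sub_eq_zero.mp h]
    rw [mul_inv_cancel₀ hq0, one_pow]

theorem qFactorial_ne_zero (hq0 : q ≠ 0) (hq : ∀ k : ℕ, 0 < k → q ^ k ≠ 1) (m : ℕ) :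
    qFactorial q m ≠ 0 :=
  prod_ne_zero_iff.mpr fun k hk => qInt_ne_zero hq0 (hq _ (by grind))

@[simp] theorem qFactorial_zero : qFactorial q 0 = 1 := by simp [qFactorial]

theorem qFactorial_succ (m : ℕ) : qFactorial q (m + 1) = qFactorial q m * qInt q (m + 1) := by
  rw [qFactorial, qFactorial, prod_Icc_succ_top (by omega)]

theorem qFactorial_add (c m : ℕ) :
    qFactorial q (c + m) = qFactorial q c * ∏ j ∈ range m, qInt q (c + 1 + j) := by
  induction m with
  | zero => simp
  | succ m ih =>
    rw [← add_assoc, qFactorial_succ, ih, prod_range_succ, mul_assoc, add_right_comm c 1 m]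

theorem qBinom_zero_right (hq0 : q ≠ 0) (hq : ∀ k : ℕ, 0 < k → q ^ k ≠ 1) (n : ℕ) :
    qBinom q n 0 = 1 := by
  rw [qBinom, Nat.sub_zero, qFactorial_zero, one_mul, div_self (qFactorial_ne_zero hq0 hq n)]

theorem qBinom_self (hq0 : q ≠ 0) (hq : ∀ k : ℕ, 0 < k → q ^ k ≠ 1) (n : ℕ) :
    qBinom q n n = 1 := by
  rw [qBinom, Nat.sub_self, qFactorial_zero, mul_one, div_self (qFactorial_ne_zero hq0 hq n)]

theorem qBinom_add_self_eq_prod_div (hq0 : q ≠ 0) (hq : ∀ k : ℕ, 0 < k → q ^ k ≠ 1) (c m : ℕ) :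
    qBinom q (c + m) m = (∏ j ∈ range m, qInt q (c + 1 + j)) / qFactorial q m := by
  rw [qBinom, Nat.add_sub_cancel, qFactorial_add, mul_comm (qFactorial q m),
    mul_div_mul_left _ _ (qFactorial_ne_zero hq0 hq c)]

theorem qBinom_succ_succ (hq0 : q ≠ 0) (hq : ∀ k : ℕ, 0 < k → q ^ k ≠ 1) {n r : ℕ} (hr : r < n) :
    qBinom q (n + 1) (r + 1) =
      q⁻¹ ^ (r + 1) * qBinom q n (r + 1) + q ^ (n + 1) * q⁻¹ ^ (r + 1) * qBinom q n r := by
  obtain ⟨b, rfl⟩ : ∃ b, n = r + 1 + b := ⟨n - r - 1, by omega⟩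
  have hfr := qFactorial_ne_zero hq0 hq r
  have hfb := qFactorial_ne_zero hq0 hq b
  have hir := qInt_ne_zero hq0 (hq (2 * (r + 1)) (by omega))
  have hib := qInt_ne_zero hq0 (hq (2 * (b + 1)) (by omega))
  rw [qBinom, qBinom, qBinom, show r + 1 + b + 1 - (r + 1) = b + 1 by omega,
    show r + 1 + b - (r + 1) = b by omega, show r + 1 + b - r = b + 1 by omega,
    qFactorial_succ (r + 1 + b), show r + 1 + b + 1 = (r + 1) + (b + 1) by omega, qInt_add,
    qFactorial_succ r, qFactorial_succ b, pow_add q (r + 1) (b + 1), inv_pow]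
  field_simp

theorem qChoose_eq_zero_of_lt : ∀ {n r : ℕ}, n < r → qChoose q n r = 0
  | 0, _ + 1, _ => rfl
  | n + 1, r + 1, h => by
    rw [qChoose, qChoose_eq_zero_of_lt (by omega), qChoose_eq_zero_of_lt (by omega)]
    ring

theorem qChoose_eq_qBinom (hq0 : q ≠ 0) (hq : ∀ k : ℕ, 0 < k → q ^ k ≠ 1) :
    ∀ {n r : ℕ}, r ≤ n → qChoose q n r = qBinom q n r
  | n, 0, _ => by rw [qChoose, qBinom_zero_right hq0 hq]
  | n + 1, r + 1, h => by
    rw [qChoose, qChoose_eq_qBinom hq0 hq (Nat.le_of_succ_le_succ h)]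
    rcases (Nat.le_of_succ_le_succ h).lt_or_eq with hr | rfl
    · rw [qChoose_eq_qBinom hq0 hq hr, qBinom_succ_succ hq0 hq hr]
    · rw [qChoose_eq_zero_of_lt (Nat.lt_succ_self r), qBinom_self hq0 hq, qBinom_self hq0 hq,
        ← mul_pow, mul_inv_cancel₀ hq0]
      ring

theorem sum_qChoose_mul_pow (hq0 : q ≠ 0) (n : ℕ) (z : K) :
    ∑ r ∈ range (n + 1), (-1) ^ r * qChoose q n r * z ^ r =
      ∏ k ∈ range n, (1 - z * q ^ n * q⁻¹ ^ (2 * k + 1)) := by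
  induction n generalizing z with
  | zero => simp [qChoose]
  | succ n ih =>
    have hp : q * q⁻¹ = 1 := mul_inv_cancel₀ hq0
    set w := z * q⁻¹
    have hterm : ∀ r, (-1) ^ (r + 1) * qChoose q (n + 1) (r + 1) * z ^ (r + 1) =
        (-1) ^ (r + 1) * qChoose q n (r + 1) * w ^ (r + 1) -
          z * q ^ n * ((-1) ^ r * qChoose q n r * w ^ r) := fun r => by
      rw [qChoose]
      linear_combination (-1) ^ (r + 1) * z ^ (r + 1) * q ^ n * q⁻¹ ^ r * qChoose q n r * hp
    have hshift : 1 + ∑ r ∈ range (n + 1), (-1) ^ (r + 1) * qChoose q n (r + 1) * w ^ (r + 1) =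
        ∑ r ∈ range (n + 1), (-1) ^ r * qChoose q n r * w ^ r := by
      have h := sum_range_succ' (fun r => (-1) ^ r * qChoose q n r * w ^ r) (n + 1)
      rw [sum_range_succ, qChoose_eq_zero_of_lt (Nat.lt_succ_self n)] at h
      simp only [qChoose, pow_zero, mul_one, mul_zero, zero_mul, add_zero] at h
      rw [h, add_comm]
    have hfactor : ∀ k, 1 - z * q ^ (n + 1) * q⁻¹ ^ (2 * (k + 1) + 1) =
        1 - w * q ^ n * q⁻¹ ^ (2 * k + 1) := fun k => by
      linear_combination (-(z * q ^ n * q⁻¹ ^ (2 * k + 2))) * hp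
    rw [sum_range_succ', sum_congr rfl fun r _ => hterm r, sum_sub_distrib, ← mul_sum,
      prod_range_succ', prod_congr rfl fun k _ => hfactor k, ← ih]
    simp only [qChoose, pow_zero, mul_one]
    linear_combination
      hshift + z * q ^ n * (∑ r ∈ range (n + 1), (-1) ^ r * qChoose q n r * w ^ r) * hp

theorem sum_qBinom_mul_pow (hq0 : q ≠ 0) (hq : ∀ k : ℕ, 0 < k → q ^ k ≠ 1) (n : ℕ) (z : K) :
    ∑ r ∈ range (n + 1), (-1) ^ r * qBinom q n r * z ^ r =
      ∏ k ∈ range n, (1 - z * q ^ n * q⁻¹ ^ (2 * k + 1)) := by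
  rw [← sum_qChoose_mul_pow hq0]
  refine sum_congr rfl fun r hr => ?_
  rw [qChoose_eq_qBinom hq0 hq (Nat.lt_succ_iff.mp (mem_range.mp hr))]

theorem sum_qBinom_mul_pow_eq_zero (hq0 : q ≠ 0) (hq : ∀ k : ℕ, 0 < k → q ^ k ≠ 1) {m k : ℕ}
    (hk : k ≤ m) :
    ∑ r ∈ range (m + 2), (-1) ^ r * qBinom q (m + 1) r * (q ^ k * q⁻¹ ^ (m - k)) ^ r = 0 := by
  rw [sum_qBinom_mul_pow hq0 hq]
  refine prod_eq_zero (mem_range.mpr (Nat.lt_succ_of_le hk)) ?_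
  obtain ⟨d, rfl⟩ := Nat.exists_eq_add_of_le hk
  rw [Nat.add_sub_cancel_left, show q ^ k * q⁻¹ ^ d * q ^ (k + d + 1) * q⁻¹ ^ (2 * k + 1) =
    (q * q⁻¹) ^ (2 * k + d + 1) by ring, mul_inv_cancel₀ hq0, one_pow, sub_self]

theorem sum_qBinom_mul_prod_eq_zero (hq0 : q ≠ 0) (hq : ∀ k : ℕ, 0 < k → q ^ k ≠ 1) (m : ℕ)
    (a b : ℕ → K) :
    ∑ r ∈ range (m + 2), (-1) ^ r * qBinom q (m + 1) r *
      ∏ j ∈ range m, (a j * q ^ r + b j * q⁻¹ ^ r) = 0 := by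
  have expand : ∀ r, ∏ j ∈ range m, (a j * q ^ r + b j * q⁻¹ ^ r) =
      ∑ A ∈ (range m).powerset,
        (∏ j ∈ A, a j) * (∏ j ∈ range m \ A, b j) * (q ^ #A * q⁻¹ ^ (m - #A)) ^ r := fun r => by
    rw [prod_add]
    refine sum_congr rfl fun A hA => ?_
    rw [prod_mul_distrib, prod_mul_distrib, prod_const, prod_const,
      card_sdiff_of_subset (mem_powerset.mp hA), card_range, mul_pow, ← pow_mul, ← pow_mul,
      ← pow_mul, ← pow_mul, mul_comm #A r, mul_comm (m - #A) r]
    ring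
  simp_rw [expand, mul_sum]
  rw [sum_comm]
  refine sum_eq_zero fun A hA => ?_
  have hA : #A ≤ m := by simpa using card_le_card (mem_powerset.mp hA)
  set c := (∏ j ∈ A, a j) * ∏ j ∈ range m \ A, b j
  set w := q ^ #A * q⁻¹ ^ (m - #A)
  calc ∑ r ∈ range (m + 2), (-1) ^ r * qBinom q (m + 1) r * (c * w ^ r)
      = c * ∑ r ∈ range (m + 2), (-1) ^ r * qBinom q (m + 1) r * w ^ r := by
        rw [mul_sum]
        exact sum_congr rfl fun r _ => by ring
    _ = 0 := by rw [sum_qBinom_mul_pow_eq_zero hq0 hq hA, mul_zero]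

end QuantumBinomial

open QuantumBinomial Finset

theorem quantum_binomial_alternating_sum_general (n s : ℕ) (hn : 1 ≤ n) (q : ℂ)
    (hq0 : q ≠ 0) (hq : ∀ k : ℕ, 0 < k → q ^ k ≠ 1) :
    let qi : ℕ → ℂ := fun k => (q ^ k - q⁻¹ ^ k) / (q - q⁻¹)
    let qfact : ℕ → ℂ := fun m => ∏ k ∈ Finset.Icc 1 m, qi k
    let qbinom : ℕ → ℕ → ℂ := fun a b => qfact a / (qfact b * qfact (a - b))
    ∑ r ∈ Finset.range (n + 1),
        (-1 : ℂ) ^ r * qbinom n r * qbinom (n + r + s - 1) (n - 1) = 0 := by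
  intro qi qfact qbinom
  show ∑ r ∈ range (n + 1), (-1) ^ r * qBinom q n r * qBinom q (n + r + s - 1) (n - 1) = 0
  obtain ⟨m, rfl⟩ : ∃ m, n = m + 1 := ⟨n - 1, by omega⟩
  have summand : ∀ r, qBinom q (m + 1 + r + s - 1) (m + 1 - 1) =
      (∏ j ∈ range m, (q ^ (s + 1 + j) / (q - q⁻¹) * q ^ r +
        -(q⁻¹ ^ (s + 1 + j) / (q - q⁻¹)) * q⁻¹ ^ r)) / qFactorial q m := fun r => by
    rw [show m + 1 + r + s - 1 = r + s + m by omega, Nat.add_sub_cancel,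
      qBinom_add_self_eq_prod_div hq0 hq]
    congr 1
    refine prod_congr rfl fun j _ => ?_
    rw [show r + s + 1 + j = r + (s + 1 + j) by omega, qInt_add_eq_mul_pow_add_mul_inv_pow]
  simp_rw [summand, ← mul_div_assoc]
  rw [← sum_div, sum_qBinom_mul_prod_eq_zero hq0 hq, zero_div]

/-- Alternating sum of quantum binomial coefficients:
`∑_{r=0}^{n} (-1)^r [n choose r] [n+r+s-1 choose n-1] = 0` for `n, s ≥ 1`. -/
theorem quantum_binomial_alternating_sum (n s : ℕ) (hn : 1 ≤ n) (hs : 1 ≤ s) (q : ℂ)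
    (hq0 : q ≠ 0) (hq : ∀ k : ℕ, 0 < k → q ^ k ≠ 1) :
    let qi : ℕ → ℂ := fun k => (q ^ k - q⁻¹ ^ k) / (q - q⁻¹)
    let qfact : ℕ → ℂ := fun m => ∏ k ∈ Finset.Icc 1 m, qi k
    let qbinom : ℕ → ℕ → ℂ := fun a b => qfact a / (qfact b * qfact (a - b))
    ∑ r ∈ Finset.range (n + 1),
        (-1 : ℂ) ^ r * qbinom n r * qbinom (n + r + s - 1) (n - 1) = 0 :=
  quantum_binomial_alternating_sum_general n s hn q hq0 hq
end

section
/- Let R be a commutative ring, V an R-module, C an R-linear endomorphism of V, β ∈ R, and x, y ∈ V elements such that (C − β·id)(y) = x and (C − β·id)(x) = 0. Then for every polynomial P ∈ R[X], one has P(C)(y) = P(β)·y + P′(β)·x, where P′ is the formal derivative of P. -/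
/-! Expand `P` in powers of `X - β` (its Taylor expansion at `β`), so that `P(C)` becomes a
polynomial in `N = C - β`. Since `N y = x` and `N x = 0`, every power `N ^ i` with `i ≥ 2`
kills `y`, and only the coefficients of `1` and `X - β`, namely `P(β)` and `P′(β)`, survive. -/

open Polynomial

theorem Polynomial.aeval_apply_eq_coeff_zero_smul_add_coeff_one_smul {R V : Type*}
    [CommSemiring R] [AddCommMonoid V] [Module R V] (N : Module.End R V) {x y : V}
    (hy : N y = x) (hx : N x = 0) (Q : R[X]) : aeval N Q y = Q.coeff 0 • y + Q.coeff 1 • x := by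
  induction Q using Polynomial.induction_on' with
  | add p q hp hq =>
    simp only [map_add, LinearMap.add_apply, hp, hq, coeff_add, add_smul]
    abel
  | monomial n a =>
    rw [aeval_monomial, Module.End.mul_apply, Module.algebraMap_end_apply]
    rcases n with _ | _ | n
    · simp
    · simp [hy]
    · simp [pow_succ, hy, hx, coeff_monomial]

/-- If `(C - β·id) y = x` and `(C - β·id) x = 0`, then for any polynomial `P`,
`P(C) y = P(β)·y + P′(β)·x`. -/
theorem poly_eval_on_jordan_block {R : Type*} [CommRing R] {V : Type*} [AddCommGroup V]
    [Module R V] (C : Module.End R V) (β : R) (x y : V)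
    (hy : C y - β • y = x) (hx : C x - β • x = 0) (P : Polynomial R) :
    (Polynomial.aeval C P) y = P.eval β • y + (Polynomial.derivative P).eval β • x := by
  set N := C - algebraMap R (Module.End R V) β
  have hNy : N y = x := by simpa [N] using hy
  have hNx : N x = 0 := by simpa [N] using hx
  have hC : aeval C P = aeval N (taylor β P) := by
    rw [taylor_apply, aeval_comp]
    simp [N]
  rw [hC, aeval_apply_eq_coeff_zero_smul_add_coeff_one_smul N hNy hNx, taylor_coeff_zero,
    taylor_coeff_one]
end

section
/- For every natural number n, ∑_{k=0}^{⌊n/2⌋} (C(n,k) − C(n,k−1))² = Catalan(n), where C(n,k) is the binomial coefficient (with C(n,−1) = 0) and Catalan(n) = C(2n,n)/(n+1) is the n-th Catalan number. -/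
/-!
The summand `ballot n k = C(n,k) - C(n,n+1-k)` changes sign under `k ↦ n + 1 - k`, so the sum of
its squares over `k ≤ n / 2` is half the sum over `k ≤ n + 1` (a middle term, if there is one,
vanishes). Over the antidiagonal `i + j = n + 1` the square `(C(n,i) - C(n,j))²` expands, by
Vandermonde's identity, to `2 (C(2n,n) - C(2n,n+1))`, and `C(2n,n) - C(2n,n+1)` is `catalan n`.
-/

open Finset

theorem Finset.sum_range_succ_eq_two_nsmul_of_symmetric {M : Type*} [AddCommMonoid M]
    (f : ℕ → M) (N : ℕ) (hsymm : ∀ k ≤ N, f (N - k) = f k) (hmid : Even N → f (N / 2) = 0) :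
    ∑ k ∈ range (N + 1), f k = 2 • ∑ k ∈ range ((N + 1) / 2), f k := by
  have hreflect : ∀ a m, N + 1 = a + m → m ≤ a →
      ∑ k ∈ range m, f (a + k) = ∑ k ∈ range m, f k := fun a m hN hm => by
    rw [← sum_range_reflect]
    refine sum_congr rfl fun k hk => ?_
    rw [← hsymm k (by grind), show a + (m - 1 - k) = N - k by grind]
  obtain ⟨m, rfl | rfl⟩ := Nat.even_or_odd' N
  · have hzero : f m = 0 := by simpa using hmid (even_two_mul m)
    rw [show 2 * m + 1 = (m + 1) + m by omega, sum_range_add, hreflect _ _ (by omega) (by omega),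
      sum_range_succ, hzero, show (m + 1 + m) / 2 = m by omega, add_zero, two_nsmul]
  · rw [show 2 * m + 1 + 1 = (m + 1) + (m + 1) by omega, sum_range_add,
      hreflect _ _ (by omega) le_rfl, show (m + 1 + (m + 1)) / 2 = m + 1 by omega, two_nsmul]

lemma sum_antidiagonal_choose_sq (n : ℕ) :
    ∑ ij ∈ antidiagonal (n + 1), (n.choose ij.1 : ℤ) ^ 2 = (2 * n).choose n := by
  rw [Nat.sum_antidiagonal_eq_sum_range_succ_mk, sum_range_succ, Nat.choose_succ_self,
    ← Nat.sum_range_choose_sq]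
  push_cast
  ring

lemma sum_antidiagonal_sq_choose_sub_choose (n : ℕ) :
    ∑ ij ∈ antidiagonal (n + 1), ((n.choose ij.1 : ℤ) - n.choose ij.2) ^ 2 =
      2 * ((2 * n).choose n - (2 * n).choose (n + 1)) := by
  have hcross : ∑ ij ∈ antidiagonal (n + 1), (n.choose ij.1 : ℤ) * n.choose ij.2 =
      (2 * n).choose (n + 1) := by
    rw [two_mul, Nat.add_choose_eq]
    push_cast
    rfl
  have hswap := Nat.sum_antidiagonal_swap (n := n + 1) (f := fun ij => (n.choose ij.1 : ℤ) ^ 2)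
  simp only [Prod.fst_swap] at hswap
  simp only [sub_sq, sum_add_distrib, sum_sub_distrib, mul_assoc, ← mul_sum, hcross, hswap,
    sum_antidiagonal_choose_sq]
  ring

lemma catalan_eq_choose_sub_choose (n : ℕ) :
    (catalan n : ℤ) = (2 * n).choose n - (2 * n).choose (n + 1) := by
  have hcatalan : ((n : ℤ) + 1) * catalan n = (2 * n).choose n := by
    exact_mod_cast succ_mul_catalan_eq_centralBinom n
  have hchoose : ((2 * n).choose (n + 1) : ℤ) * (n + 1) = (2 * n).choose n * n := by
    have := Nat.choose_succ_right_eq (2 * n) n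
    rw [show 2 * n - n = n by omega] at this
    exact_mod_cast this
  refine mul_left_cancel₀ (show (n : ℤ) + 1 ≠ 0 by positivity) ?_
  linear_combination hcatalan + hchoose

def ballot (n k : ℕ) : ℤ :=
  (n.choose k : ℤ) - if k = 0 then 0 else (n.choose (k - 1) : ℤ)

lemma ballot_eq_choose_sub_choose {n k : ℕ} (hk : k ≤ n + 1) :
    ballot n k = n.choose k - n.choose (n + 1 - k) := by
  rcases Nat.eq_zero_or_pos k with rfl | hpos
  · simp [ballot]
  · rw [ballot, if_neg hpos.ne',
      Nat.choose_symm_of_eq_add (show n = (n + 1 - k) + (k - 1) by omega)]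

lemma ballot_reflect {n k : ℕ} (hk : k ≤ n + 1) : ballot n (n + 1 - k) = -ballot n k := by
  rw [ballot_eq_choose_sub_choose hk, ballot_eq_choose_sub_choose (Nat.sub_le _ _),
    Nat.sub_sub_self hk, neg_sub]

lemma sum_range_ballot_sq (n : ℕ) :
    ∑ k ∈ range (n + 2), ballot n k ^ 2 = 2 * catalan n := by
  rw [catalan_eq_choose_sub_choose, ← sum_antidiagonal_sq_choose_sub_choose,
    Nat.sum_antidiagonal_eq_sum_range_succ_mk]
  exact sum_congr rfl fun k hk => by
    rw [ballot_eq_choose_sub_choose (Nat.lt_succ_iff.mp (mem_range.mp hk))]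

/-- `∑_{k=0}^{⌊n/2⌋} (C(n,k) - C(n,k-1))² = Catalan(n)`, with `C(n,-1) = 0`. -/
theorem sum_sq_ballot_eq_catalan (n : ℕ) :
    ∑ k ∈ Finset.range (n / 2 + 1),
        ((n.choose k : ℤ) - if k = 0 then 0 else (n.choose (k - 1) : ℤ)) ^ 2
      = (catalan n : ℤ) := by
  change ∑ k ∈ range (n / 2 + 1), ballot n k ^ 2 = catalan n
  have hsymm : ∀ k ≤ n + 1, ballot n (n + 1 - k) ^ 2 = ballot n k ^ 2 := fun k hk => by
    rw [ballot_reflect hk, neg_sq]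
  have hmid : Even (n + 1) → ballot n ((n + 1) / 2) ^ 2 = 0 := fun ⟨m, hm⟩ => by
    have hfixed := ballot_reflect (n := n) (k := m) (by omega)
    rw [show n + 1 - m = m by omega] at hfixed
    rw [show (n + 1) / 2 = m by omega, show ballot n m = 0 by linarith, zero_pow two_ne_zero]
  have hhalve := sum_range_succ_eq_two_nsmul_of_symmetric (ballot n · ^ 2) (n + 1) hsymm hmid
  rw [sum_range_ballot_sq, show (n + 1 + 1) / 2 = n / 2 + 1 by omega, two_nsmul,
    ← two_mul] at hhalve
  exact (mul_left_cancel₀ two_ne_zero hhalve).symm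
end

section
/- Let n ≥ 0 and k ≥ 0 be integers with 2k ≤ n. The number of sequences (ε₁, …, ε_n) ∈ {−1, +1}^n such that every partial sum ε₁ + ⋯ + ε_j (1 ≤ j ≤ n) is nonnegative and the total sum equals n − 2k is C(n,k) − C(n,k−1), with the convention C(n,−1) = 0. -/
/-!
Deleting the last step of a ballot sequence gives the recurrence
`count (n + 1) s = count n (s - 1) + count n (s + 1)` for `s ≥ 0`, and no ballot sequence has
negative total. The ballot numbers `C(n,k) - C(n,k-1)`, read with `k` indexing the total
`n - 2k`, satisfy the same recurrence by Pascal's rule, and vanish at the boundary total `-1`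
because `C(2j+1, j+1) = C(2j+1, j)`. Induction on `n` concludes.
-/

open Finset

theorem Nat.card_subtype_fin_succ_eq_sum_snoc {α : Type*} [Fintype α] {m : ℕ}
    (P : (Fin (m + 1) → α) → Prop) :
    Nat.card {f : Fin (m + 1) → α // P f} =
      ∑ a, Nat.card {g : Fin m → α // P (Fin.snoc g a)} := by
  rw [← Nat.card_sigma]
  exact Nat.card_congr <|
    (Equiv.subtypeEquiv (Fin.snocEquiv fun _ => α) fun _ => Iff.rfl).symm.trans
      (Equiv.subtypeProdEquivSigmaSubtype fun a g => P (Fin.snoc g a))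

namespace Ballot

def step (b : Bool) : ℤ := if b then 1 else -1

@[simp] theorem step_true : step true = 1 := rfl

@[simp] theorem step_false : step false = -1 := rfl

variable {n : ℕ}

def partialSum (f : Fin n → Bool) (j : Fin n) : ℤ :=
  ∑ i ∈ univ.filter (· ≤ j), step (f i)

def total (f : Fin n → Bool) : ℤ := ∑ i, step (f i)

def IsBallot (f : Fin n → Bool) : Prop := ∀ j, 0 ≤ partialSum f j

noncomputable def count (n : ℕ) (s : ℤ) : ℕ :=
  Nat.card {f : Fin n → Bool // IsBallot f ∧ total f = s}

theorem total_snoc (g : Fin n → Bool) (b : Bool) :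
    total (Fin.snoc g b : Fin (n + 1) → Bool) = total g + step b := by
  simp [total, Fin.sum_univ_castSucc]

theorem partialSum_snoc_castSucc (g : Fin n → Bool) (b : Bool) (j : Fin n) :
    partialSum (Fin.snoc g b : Fin (n + 1) → Bool) j.castSucc = partialSum g j := by
  simp [partialSum, sum_filter, Fin.sum_univ_castSucc, Fin.last_le_iff, Fin.castSucc_ne_last]

theorem partialSum_last (f : Fin (n + 1) → Bool) : partialSum f (Fin.last n) = total f := by
  simp [partialSum, total, Fin.le_last]

theorem isBallot_snoc_iff (g : Fin n → Bool) (b : Bool) :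
    IsBallot (Fin.snoc g b : Fin (n + 1) → Bool) ↔ IsBallot g ∧ 0 ≤ total g + step b := by
  simp [IsBallot, Fin.forall_fin_succ', partialSum_snoc_castSucc, partialSum_last, total_snoc]

theorem IsBallot.total_nonneg {f : Fin n → Bool} (hf : IsBallot f) : 0 ≤ total f := by
  cases n with
  | zero => simp [total]
  | succ n => simpa [partialSum_last] using hf (Fin.last n)

theorem count_zero (s : ℤ) : count 0 s = if s = 0 then 1 else 0 := by
  split_ifs with hs
  · simp [count, IsBallot, total, hs]
  · simp [count, total, Ne.symm hs]

theorem count_of_neg {s : ℤ} (hs : s < 0) : count n s = 0 := by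
  simp only [count, Nat.card_eq_zero, isEmpty_subtype]
  exact Or.inl fun f ⟨hf, hfs⟩ => by linarith [hf.total_nonneg]

theorem count_succ {s : ℤ} (hs : 0 ≤ s) :
    count (n + 1) s = count n (s - 1) + count n (s + 1) := by
  simp only [count, Nat.card_subtype_fin_succ_eq_sum_snoc, Fintype.sum_bool, isBallot_snoc_iff,
    total_snoc]
  congr 1 <;> refine Nat.card_congr (Equiv.subtypeEquivRight fun g => ?_) <;>
    simp only [step_true, step_false, and_assoc] <;> exact and_congr_right fun _ => by omega

def binom (n : ℕ) (k : ℤ) : ℤ := if 0 ≤ k then n.choose k.toNat else 0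

theorem binom_natCast (n k : ℕ) : binom n k = n.choose k := by
  simp [binom]

theorem binom_of_neg {k : ℤ} (hk : k < 0) : binom n k = 0 :=
  if_neg hk.not_ge

theorem binom_succ (k : ℤ) : binom (n + 1) k = binom n k + binom n (k - 1) := by
  rcases lt_trichotomy k 0 with hk | rfl | hk
  · simp [binom_of_neg, hk, Int.sub_one_lt_of_le hk.le]
  · simp [binom]
  · obtain ⟨j, rfl⟩ : ∃ j : ℕ, k = j + 1 := ⟨k.toNat - 1, by omega⟩
    rw [add_sub_cancel_right, ← Nat.cast_succ, binom_natCast, binom_natCast, binom_natCast,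
      Nat.choose_succ_succ', Nat.cast_add, add_comm]

def ballotNumber (n : ℕ) (k : ℤ) : ℤ := binom n k - binom n (k - 1)

theorem ballotNumber_natCast (n k : ℕ) :
    ballotNumber n k = (n.choose k : ℤ) - if k = 0 then 0 else (n.choose (k - 1) : ℤ) := by
  rcases k with _ | k
  · simp [ballotNumber, binom]
  · simp [ballotNumber, ← binom_natCast]

theorem ballotNumber_succ (k : ℤ) :
    ballotNumber (n + 1) k = ballotNumber n k + ballotNumber n (k - 1) := by
  simp only [ballotNumber, binom_succ]
  ring

theorem ballotNumber_eq_zero {k : ℤ} (hk : (n : ℤ) + 1 = 2 * k) : ballotNumber n k = 0 := by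
  obtain ⟨j, rfl⟩ : ∃ j : ℕ, k = j + 1 := ⟨k.toNat - 1, by omega⟩
  obtain rfl : n = 2 * j + 1 := by omega
  rw [ballotNumber, add_sub_cancel_right, ← Nat.cast_succ, binom_natCast, binom_natCast,
    Nat.choose_symm_half, sub_self]

theorem count_eq_ballotNumber (k : ℤ) (hk : 2 * k ≤ n + 1) :
    count n (n - 2 * k) = ballotNumber n k := by
  induction n generalizing k with
  | zero =>
    rcases (show k ≤ 0 by omega).eq_or_lt with rfl | hk
    · simp [count_zero, ballotNumber, binom]
    · simp [count_zero, ballotNumber, binom_of_neg, hk, Int.sub_one_lt_of_le hk.le, hk.ne]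
  | succ m ih =>
    rcases hk.eq_or_lt with hk | hk
    · rw [count_of_neg (by push_cast; omega), ballotNumber_eq_zero (by push_cast; omega),
        Nat.cast_zero]
    · rw [count_succ (by push_cast; omega), ballotNumber_succ,
        show ((m + 1 : ℕ) : ℤ) - 2 * k - 1 = m - 2 * k by push_cast; ring,
        show ((m + 1 : ℕ) : ℤ) - 2 * k + 1 = m - 2 * (k - 1) by push_cast; ring]
      push_cast
      rw [ih k (by omega), ih (k - 1) (by omega)]

end Ballot

/-- The number of `±1` sequences of length `n` with all partial sums nonnegative and
total sum `n - 2k` is the ballot number `C(n,k) - C(n,k-1)` (with `C(n,-1) = 0`). -/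
theorem ballot_count (n k : ℕ) (h : 2 * k ≤ n) :
    (Nat.card {f : Fin n → Bool //
        (∀ j : Fin n, 0 ≤ ∑ i ∈ Finset.univ.filter (fun i => i ≤ j),
            (if f i then (1 : ℤ) else -1)) ∧
        (∑ i : Fin n, (if f i then (1 : ℤ) else -1)) = (n : ℤ) - 2 * k} : ℤ)
      = (n.choose k : ℤ) - if k = 0 then 0 else (n.choose (k - 1) : ℤ) := by
  rw [← Ballot.ballotNumber_natCast]
  exact Ballot.count_eq_ballotNumber k (by omega)
end
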